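/- arXiv:2409.12630 — 2 statements merged into one kernel-verified Lean document; each statement's English description precedes it below -/
import Mathlib

section
/- Let g be continuous and concave in ξ, and assume at least one x ∈ X is feasible for 2RO-C. Then the k-adaptability problem has the same optimal value as the two-stage robust problem (and the same optimal first-stage solutions) whenever k ≥ min{|Y|, (n_ξ+1)·Σ_{i=0}^{min{m,n_ξ}} C(η, i)} in the fixed-recourse case (B(ξ) constant in ξ), and whenever k ≥ min{|Y|, (n_ξ+1)·Σ_{i=0}^{n_ξ} C(η, i)} in the general (random recourse) case; in particular k ∈ O(η^{min{m,n_ξ}}·(n_ξ+1)) respectively k ∈ O(η^{n_ξ}·(n_ξ+1)) policies suffice. -/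
noncomputable section

/-- Worst-case value `sup_{ξ ∈ U} min_{y ∈ S} F(y, ξ)` with values in `ℝ ∪ {±∞}`. -/
def worstValE {Eξ Ey : Type*} (U : Set Eξ) (S : Set Ey)
    (F : Ey → Eξ → EReal) : EReal :=
  ⨆ ξ ∈ U, ⨅ y ∈ S, F y ξ

/-- The `k`-adaptability value for a fixed first stage. -/
def kValE {Eξ Ey : Type*} (U : Set Eξ) (S : Set Ey)
    (F : Ey → Eξ → EReal) (k : ℕ) : EReal :=
  ⨅ y ∈ {y : Fin k → Ey | ∀ i, y i ∈ S}, worstValE U (Set.range y) F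

variable {nx ny nξ m : ℕ}

/-- Feasibility of `(x,y)` under scenario `ξ` for the structured constraint system
`A(ξ)x + B(ξ)y ≥ h(ξ)` with `h(ξ) = h + Hξ`, `A(ξ) = A + Σᵢ Aⁱξᵢ`, `B(ξ) = B + Σᵢ Bⁱξᵢ`. -/
def FeasS (hv : Fin m → ℤ) (H : Matrix (Fin m) (Fin nξ) ℤ)
    (A0 : Matrix (Fin m) (Fin nx) ℤ) (Ai : Fin nξ → Matrix (Fin m) (Fin nx) ℤ)
    (B0 : Matrix (Fin m) (Fin ny) ℤ) (Bi : Fin nξ → Matrix (Fin m) (Fin ny) ℤ)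
    (x : Fin nx → ℝ) (y : Fin ny → ℝ) (ξ : Fin nξ → ℝ) : Prop :=
  ∀ l, (hv l : ℝ) + ∑ i, (H l i : ℝ) * ξ i ≤
    (∑ j, ((A0 l j : ℝ) + ∑ i, ξ i * (Ai i l j : ℝ)) * x j) +
    ∑ j, ((B0 l j : ℝ) + ∑ i, ξ i * (Bi i l j : ℝ)) * y j

open Classical in
/-- `f(x,y,ξ) = g(x,y,ξ)` if the constraints hold and `+∞` otherwise. -/
def fES (g : (Fin nx → ℝ) → (Fin ny → ℝ) → (Fin nξ → ℝ) → ℝ)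
    (hv : Fin m → ℤ) (H : Matrix (Fin m) (Fin nξ) ℤ)
    (A0 : Matrix (Fin m) (Fin nx) ℤ) (Ai : Fin nξ → Matrix (Fin m) (Fin nx) ℤ)
    (B0 : Matrix (Fin m) (Fin ny) ℤ) (Bi : Fin nξ → Matrix (Fin m) (Fin ny) ℤ)
    (x : Fin nx → ℝ) (y : Fin ny → ℝ) (ξ : Fin nξ → ℝ) : EReal :=
  if FeasS hv H A0 Ai B0 Bi x y ξ then ((g x y ξ : ℝ) : EReal) else ⊤

/-- `x` is feasible for the two-stage robust problem. -/
def Feasible2RO (hv : Fin m → ℤ) (H : Matrix (Fin m) (Fin nξ) ℤ)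
    (A0 : Matrix (Fin m) (Fin nx) ℤ) (Ai : Fin nξ → Matrix (Fin m) (Fin nx) ℤ)
    (B0 : Matrix (Fin m) (Fin ny) ℤ) (Bi : Fin nξ → Matrix (Fin m) (Fin ny) ℤ)
    (Yx : (Fin nx → ℝ) → Set (Fin ny → ℝ)) (U : Set (Fin nξ → ℝ))
    (x : Fin nx → ℝ) : Prop :=
  ∀ ξ ∈ U, ∃ y ∈ Yx x, FeasS hv H A0 Ai B0 Bi x y ξ

/-- Coefficient vector `a_l(x,y)` of `ξ` in row `l`. -/
def rowCoef (H : Matrix (Fin m) (Fin nξ) ℤ) (Ai : Fin nξ → Matrix (Fin m) (Fin nx) ℤ)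
    (Bi : Fin nξ → Matrix (Fin m) (Fin ny) ℤ)
    (x : Fin nx → ℝ) (y : Fin ny → ℝ) (l : Fin m) : Fin nξ → ℝ :=
  fun i => (∑ j, (Ai i l j : ℝ) * x j) + (∑ j, (Bi i l j : ℝ) * y j) - (H l i : ℝ)

/-- Right-hand side `h_l(x,y)` of row `l`. -/
def rowRhs (hv : Fin m → ℤ) (A0 : Matrix (Fin m) (Fin nx) ℤ)
    (B0 : Matrix (Fin m) (Fin ny) ℤ)
    (x : Fin nx → ℝ) (y : Fin ny → ℝ) (l : Fin m) : ℝ :=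
  (hv l : ℝ) - (∑ j, (A0 l j : ℝ) * x j) - ∑ j, (B0 l j : ℝ) * y j

/-- The set `H(x)` of hyperplanes with nonzero normal that intersect `U`. -/
def HypSet (hv : Fin m → ℤ) (H : Matrix (Fin m) (Fin nξ) ℤ)
    (A0 : Matrix (Fin m) (Fin nx) ℤ) (Ai : Fin nξ → Matrix (Fin m) (Fin nx) ℤ)
    (B0 : Matrix (Fin m) (Fin ny) ℤ) (Bi : Fin nξ → Matrix (Fin m) (Fin ny) ℤ)
    (Yx : (Fin nx → ℝ) → Set (Fin ny → ℝ)) (U : Set (Fin nξ → ℝ))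
    (x : Fin nx → ℝ) : Set (Set (Fin nξ → ℝ)) :=
  {P | ∃ y ∈ Yx x, ∃ l : Fin m, rowCoef H Ai Bi x y l ≠ 0 ∧
    P = {ξ | ∑ i, rowCoef H Ai Bi x y l i * ξ i = rowRhs hv A0 B0 x y l} ∧
    (P ∩ U).Nonempty}

end

/-!
Fix a first stage `x` and a level `r` above its worst-case value, so that every scenario
`ξ ∈ U` admits a feasible second stage `y ∈ Y(x)` with `g x y ξ ≤ r`. Each constraint row is an
affine function of `ξ` that has no zero in `U`, vanishes on all of `U`, or has the zero set of a
hyperplane of `H(x)`; hence on a cell of the arrangement `H(x)` the set of feasible `y` is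
constant. The cell and the sets `{ξ | r < g x y ξ}` are convex, so by Helly's theorem `n_ξ + 1`
second stages already cover it. Off the hyperplanes a cell is determined by the set of
hyperplanes on whose positive side it lies. The hyperplanes of a set shattered by these patterns
have linearly independent normals, so there are at most `n_ξ` of them (at most `m` with fixed
recourse, where the normal depends only on the row), and the Sauer–Shelah lemma bounds the number
of cells by `∑_{i ≤ t} C(η, i)`. The points off the hyperplanes are dense in `U` and being covered
is a closed condition, so the chosen second stages cover all of `U`.
-/

open Module

section SignPatterns

variable {ι E : Type*} [Fintype ι] [AddCommGroup E] [Module ℝ E]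

noncomputable def posPattern (ψ : ι → E →ᵃ[ℝ] ℝ) (ξ : E) : Finset ι :=
  Finset.univ.filter fun j => 0 < ψ j ξ

@[simp]
lemma mem_posPattern {ψ : ι → E →ᵃ[ℝ] ℝ} {ξ : E} {j : ι} :
    j ∈ posPattern ψ ξ ↔ 0 < ψ j ξ := by
  simp [posPattern]

lemma exists_pos_of_not_linearIndependent {M : Type*} [AddCommGroup M]
    [Module ℝ M] {v : ι → M} (h : ¬ LinearIndependent ℝ v) :
    ∃ g : ι → ℝ, ∑ j, g j • v j = 0 ∧ ∃ j, 0 < g j := by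
  obtain ⟨g, hg, j, hj⟩ := Fintype.not_linearIndependent_iff.1 h
  rcases hj.lt_or_gt with hj | hj
  · exact ⟨-g, by simp [neg_smul, Finset.sum_neg_distrib, hg], j, by simpa using hj⟩
  · exact ⟨g, hg, j, hj⟩

lemma sum_mul_apply_eq_of_sum_smul_linear_eq_zero (φ : ι → E →ᵃ[ℝ] ℝ) {g : ι → ℝ}
    (h : ∑ j, g j • (φ j).linear = 0) (ξ ξ' : E) :
    ∑ j, g j * φ j ξ = ∑ j, g j * φ j ξ' := by
  rw [← sub_eq_zero, ← Finset.sum_sub_distrib]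
  calc ∑ j, (g j * φ j ξ - g j * φ j ξ') = ∑ j, g j * (φ j).linear (ξ -ᵥ ξ') := by
        refine Finset.sum_congr rfl fun j _ => ?_
        rw [AffineMap.linearMap_vsub, vsub_eq_sub, mul_sub]
    _ = (∑ j, g j • (φ j).linear) (ξ -ᵥ ξ') := by simp [LinearMap.sum_apply]
    _ = 0 := by rw [h, LinearMap.zero_apply]

/-- At a point realising `{j | 0 < g j}` the function `∑ g j * ψ j` is positive, at one realising
the complement it is nonpositive; so it is not constant and `∑ g j • (ψ j).linear ≠ 0`. -/
lemma linearIndependent_of_shatters [DecidableEq ι] {ψ : ι → E →ᵃ[ℝ] ℝ}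
    {𝒜 : Finset (Finset ι)} (h𝒜 : ↑𝒜 ⊆ Set.range (posPattern ψ)) {s : Finset ι}
    (hs : 𝒜.Shatters s) : LinearIndependent ℝ fun j : s => (ψ j).linear := by
  by_contra hli
  obtain ⟨g, hg, j₀, hj₀⟩ := exists_pos_of_not_linearIndependent hli
  have realize : ∀ p : s → Prop, ∃ ξ, ∀ j : s, p j ↔ 0 < ψ j ξ := by
    classical
    intro p
    obtain ⟨σ, hσ, hsσ⟩ := hs (t := (Finset.univ.filter p).map (Function.Embedding.subtype _))
      (by intro j; simp only [Finset.mem_map]; rintro ⟨j, -, rfl⟩; exact j.2)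
    obtain ⟨ξ, rfl⟩ := h𝒜 hσ
    refine ⟨ξ, fun j => ?_⟩
    have hj := Finset.ext_iff.1 hsσ j
    rw [Finset.mem_inter, mem_posPattern, Finset.mem_map] at hj
    simp only [Finset.mem_filter, Finset.mem_univ, true_and, Function.Embedding.coe_subtype,
      Subtype.val_inj, exists_eq_right] at hj
    exact hj.symm.trans (and_iff_right j.2)
  obtain ⟨ξp, hp⟩ := realize fun j => 0 < g j
  obtain ⟨ξn, hn⟩ := realize fun j => ¬ 0 < g j
  have hpos : 0 < ∑ j, g j * ψ j ξp := by
    refine Finset.sum_pos' (fun j _ => ?_) ⟨j₀, Finset.mem_univ _, mul_pos hj₀ ((hp j₀).1 hj₀)⟩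
    by_cases hgj : 0 < g j
    · exact (mul_pos hgj ((hp j).1 hgj)).le
    · exact mul_nonneg_of_nonpos_of_nonpos (not_lt.1 hgj) (not_lt.1 (mt (hp j).2 hgj))
  have hnonpos : ∑ j, g j * ψ j ξn ≤ 0 := by
    refine Finset.sum_nonpos fun j _ => ?_
    by_cases hgj : 0 < g j
    · exact mul_nonpos_of_nonneg_of_nonpos hgj.le (not_lt.1 fun h => (hn j).2 h hgj)
    · exact mul_nonpos_of_nonpos_of_nonneg (not_lt.1 hgj) ((hn j).1 hgj).le
  rw [sum_mul_apply_eq_of_sum_smul_linear_eq_zero (fun j : s => ψ j) hg ξp ξn] at hpos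
  linarith

theorem card_le_sum_choose_of_subset_range_posPattern {ψ : ι → E →ᵃ[ℝ] ℝ} {t : ℕ}
    (hdep : ∀ s : Finset ι, t < s.card → ¬ LinearIndependent ℝ fun j : s => (ψ j).linear)
    {𝒜 : Finset (Finset ι)} (h𝒜 : ↑𝒜 ⊆ Set.range (posPattern ψ)) :
    𝒜.card ≤ ∑ i ∈ Finset.Iic t, (Fintype.card ι).choose i := by
  classical
  have hvc : 𝒜.vcDim ≤ t := Finset.sup_le fun s hs =>
    not_lt.1 fun hts => hdep s hts (linearIndependent_of_shatters h𝒜 (Finset.mem_shatterer.1 hs))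
  calc 𝒜.card ≤ 𝒜.shatterer.card := 𝒜.card_le_card_shatterer
    _ ≤ ∑ i ∈ Finset.Iic 𝒜.vcDim, (Fintype.card ι).choose i := Finset.card_shatterer_le_sum_vcDim
    _ ≤ _ := Finset.sum_le_sum_of_subset (Finset.Iic_subset_Iic.2 hvc)

omit [Fintype ι] in
lemma not_linearIndependent_linear_of_finrank_lt [FiniteDimensional ℝ E] (ψ : ι → E →ᵃ[ℝ] ℝ)
    {s : Finset ι} (hs : finrank ℝ E < s.card) :
    ¬ LinearIndependent ℝ fun j : s => (ψ j).linear := fun hli => by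
  have := hli.fintype_card_le_finrank
  rw [Fintype.card_coe, Module.finrank_linearMap_self] at this
  omega

end SignPatterns

section Cells

variable {ι E : Type*} [AddCommGroup E] [Module ℝ E]

def signCell (U : Set E) (ψ : ι → E →ᵃ[ℝ] ℝ) (ξ₀ : E) : Set E :=
  {ξ ∈ U | ∀ j, SignType.sign (ψ j ξ) = SignType.sign (ψ j ξ₀)}

def genericSet (U : Set E) (ψ : ι → E →ᵃ[ℝ] ℝ) : Set E :=
  {ξ ∈ U | ∀ j, (∃ u ∈ U, ψ j u ≠ 0) → ψ j ξ ≠ 0}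

def ZeroSetInFamily (U : Set E) (ψ : ι → E →ᵃ[ℝ] ℝ) (φ : E →ᵃ[ℝ] ℝ) : Prop :=
  (∃ z ∈ U, φ z = 0) → (∀ z ∈ U, φ z = 0) ∨ ∃ j, ∀ z ∈ U, (φ z = 0 ↔ ψ j z = 0)

lemma convex_setOf_sign_eq (s : SignType) : Convex ℝ {a : ℝ | SignType.sign a = s} := by
  cases s
  · simp only [SignType.zero_eq_zero, sign_eq_zero_iff]; exact convex_singleton (0 : ℝ)
  · simp only [SignType.neg_eq_neg_one, sign_eq_neg_one_iff]; exact convex_Iio (0 : ℝ)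
  · simp only [SignType.pos_eq_one, sign_eq_one_iff]; exact convex_Ioi (0 : ℝ)

lemma convex_signCell {U : Set E} (hU : Convex ℝ U) (ψ : ι → E →ᵃ[ℝ] ℝ) (ξ₀ : E) :
    Convex ℝ (signCell U ψ ξ₀) := by
  have : signCell U ψ ξ₀ =
      U ∩ ⋂ j, ψ j ⁻¹' {a | SignType.sign a = SignType.sign (ψ j ξ₀)} := by
    ext; simp [signCell]
  rw [this]
  exact hU.inter (convex_iInter fun j => (convex_setOf_sign_eq _).affine_preimage (ψ j))

/-- A sign change of `φ` between `ξ` and `ξ'` gives a zero of `φ` on the segment, hence a zero of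
some `ψ j` there; as `ψ j` has the same sign at both ends, it vanishes at `ξ'`, and so does `φ`. -/
lemma nonneg_of_sign_eq {U : Set E} (hU : Convex ℝ U) {ψ : ι → E →ᵃ[ℝ] ℝ} {φ : E →ᵃ[ℝ] ℝ}
    (hφ : ZeroSetInFamily U ψ φ) {ξ ξ' : E} (hξ : ξ ∈ U) (hξ' : ξ' ∈ U)
    (hsign : ∀ j, SignType.sign (ψ j ξ) = SignType.sign (ψ j ξ')) (h : 0 ≤ φ ξ) :
    0 ≤ φ ξ' := by
  by_contra! h'
  obtain ⟨z, hz, hφz⟩ : ∃ z ∈ segment ℝ ξ ξ', φ z = 0 := by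
    rw [← Set.mem_image, image_segment, segment_eq_uIcc]
    exact Set.mem_uIcc.2 (Or.inr ⟨h'.le, h⟩)
  have hzU := hU.segment_subset hξ hξ' hz
  rcases hφ ⟨z, hzU, hφz⟩ with hzero | ⟨j, hj⟩
  · exact h'.ne (hzero ξ' hξ')
  · have hψz : SignType.sign (ψ j z) = SignType.sign (ψ j ξ') :=
      (convex_setOf_sign_eq _).affine_preimage (ψ j) |>.segment_subset (hsign j) rfl hz
    rw [(hj z hzU).1 hφz, sign_zero, eq_comm, sign_eq_zero_iff, ← hj ξ' hξ'] at hψz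
    exact h'.ne hψz

theorem exists_subset_card_le_finrank_succ_forall_exists_le [FiniteDimensional ℝ E] {β : Type*}
    {S : Finset β} {C : Set E} {G : β → E → ℝ} (hG : ∀ y ∈ S, ConcaveOn ℝ C (G y)) {r : ℝ}
    (h : ∀ ξ ∈ C, ∃ y ∈ S, G y ξ ≤ r) :
    ∃ T ⊆ S, T.card ≤ finrank ℝ E + 1 ∧ ∀ ξ ∈ C, ∃ y ∈ T, G y ξ ≤ r := by
  by_contra! hno
  obtain ⟨ξ₀, hξ₀, -⟩ := hno ∅ (Finset.empty_subset _) (by simp)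
  obtain ⟨y₀, hy₀, -⟩ := h ξ₀ hξ₀
  obtain ⟨ξ, hξ⟩ := Convex.helly_theorem' (s := S) (F := fun y => {ξ ∈ C | r < G y ξ})
    (fun y hy => (hG y hy).convex_gt r) fun I hI hcard => by
      obtain ⟨ξ, hξC, hξ⟩ := hno I hI hcard
      exact ⟨ξ, Set.mem_iInter₂.2 fun y hy => ⟨hξC, hξ y hy⟩⟩
  rw [Set.mem_iInter₂] at hξ
  obtain ⟨y, hy, hle⟩ := h ξ (hξ y₀ hy₀).1
  exact (hξ y hy).2.not_ge hle

theorem exists_cover_signCell [FiniteDimensional ℝ E] {β κ : Type*} {U : Set E}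
    (hU : Convex ℝ U) {ψ : ι → E →ᵃ[ℝ] ℝ} {S : Finset β} {φ : β → κ → E →ᵃ[ℝ] ℝ}
    (hφ : ∀ y ∈ S, ∀ l, ZeroSetInFamily U ψ (φ y l)) {G : β → E → ℝ}
    (hG : ∀ y ∈ S, ConcaveOn ℝ U (G y)) {r : ℝ}
    (hr : ∀ ξ ∈ U, ∃ y ∈ S, (∀ l, 0 ≤ φ y l ξ) ∧ G y ξ ≤ r) {ξ₀ : E} (hξ₀ : ξ₀ ∈ U) :
    ∃ T ⊆ S, T.card ≤ finrank ℝ E + 1 ∧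
      ∀ ξ ∈ signCell U ψ ξ₀, ∃ y ∈ T, (∀ l, 0 ≤ φ y l ξ) ∧ G y ξ ≤ r := by
  classical
  have feasible_iff : ∀ y ∈ S, ∀ ξ ∈ signCell U ψ ξ₀,
      (∀ l, 0 ≤ φ y l ξ) ↔ ∀ l, 0 ≤ φ y l ξ₀ := fun y hy ξ hξ =>
    ⟨fun h l => nonneg_of_sign_eq hU (hφ y hy l) hξ.1 hξ₀ hξ.2 (h l),
      fun h l => nonneg_of_sign_eq hU (hφ y hy l) hξ₀ hξ.1 (fun j => (hξ.2 j).symm) (h l)⟩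
  have hcell : signCell U ψ ξ₀ ⊆ U := fun ξ hξ => hξ.1
  obtain ⟨T, hTS, hcard, hT⟩ := exists_subset_card_le_finrank_succ_forall_exists_le
    (S := S.filter fun y => ∀ l, 0 ≤ φ y l ξ₀) (C := signCell U ψ ξ₀)
    (fun y hy => (hG y (Finset.mem_filter.1 hy).1).subset hcell (convex_signCell hU ψ ξ₀))
    fun ξ hξ => by
      obtain ⟨y, hy, hfeas, hle⟩ := hr ξ hξ.1
      exact ⟨y, Finset.mem_filter.2 ⟨hy, (feasible_iff y hy ξ hξ).1 hfeas⟩, hle⟩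
  refine ⟨T, hTS.trans (Finset.filter_subset _ _), hcard, fun ξ hξ => ?_⟩
  obtain ⟨y, hyT, hle⟩ := hT ξ hξ
  obtain ⟨hyS, hfeas⟩ := Finset.mem_filter.1 (hTS hyT)
  exact ⟨y, hyT, (feasible_iff y hyS ξ hξ).2 hfeas, hle⟩

lemma sign_eq_sign_of_pos_iff {a b : ℝ} (ha : a ≠ 0) (hb : b ≠ 0) (h : 0 < a ↔ 0 < b) :
    SignType.sign a = SignType.sign b := by
  rcases ha.lt_or_gt with ha | ha <;> rcases hb.lt_or_gt with hb | hb
  · rw [sign_neg ha, sign_neg hb]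
  · exact absurd (h.2 hb) ha.not_gt
  · exact absurd (h.1 ha) hb.not_gt
  · rw [sign_pos ha, sign_pos hb]

lemma mem_signCell_of_posPattern_eq [Fintype ι] {U : Set E} {ψ : ι → E →ᵃ[ℝ] ℝ} {ξ ξ' : E}
    (hξ : ξ ∈ genericSet U ψ) (hξ' : ξ' ∈ genericSet U ψ)
    (h : posPattern ψ ξ' = posPattern ψ ξ) : ξ' ∈ signCell U ψ ξ := by
  refine ⟨hξ'.1, fun j => ?_⟩
  by_cases hj : ∃ u ∈ U, ψ j u ≠ 0
  · refine sign_eq_sign_of_pos_iff (hξ'.2 j hj) (hξ.2 j hj) ?_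
    simpa only [mem_posPattern] using Finset.ext_iff.1 h j
  · push Not at hj
    rw [hj ξ' hξ'.1, hj ξ hξ.1]

end Cells

section Density

variable {ι E : Type*} [NormedAddCommGroup E] [NormedSpace ℝ E]

lemma subset_closure_setOf_ne_zero {U : Set E} (hU : Convex ℝ U) (ψ : E →ᵃ[ℝ] ℝ) :
    U ⊆ closure {ξ ∈ U | (∃ u ∈ U, ψ u ≠ 0) → ψ ξ ≠ 0} := by
  intro ξ hξ
  by_cases h : (∃ u ∈ U, ψ u ≠ 0) → ψ ξ ≠ 0
  · exact subset_closure ⟨hξ, h⟩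
  push Not at h
  obtain ⟨⟨u, hu, hψu⟩, hψξ⟩ := h
  refine closure_mono ?_ (segment_subset_closure_openSegment (left_mem_segment ℝ ξ u))
  rintro z ⟨a, b, ha, hb, hab, rfl⟩
  refine ⟨hU.openSegment_subset hξ hu ⟨a, b, ha, hb, hab, rfl⟩, fun _ => ?_⟩
  rw [Convex.combo_affine_apply hab, hψξ, smul_zero, zero_add, smul_eq_mul]
  exact mul_ne_zero hb.ne' hψu

theorem subset_closure_genericSet [FiniteDimensional ℝ E] [Finite ι] {U : Set E}
    (hU : Convex ℝ U) (ψ : ι → E →ᵃ[ℝ] ℝ) : U ⊆ closure (genericSet U ψ) := by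
  set O : ι → Set U := fun j => {ξ | (∃ u ∈ U, ψ j u ≠ 0) → ψ j ξ ≠ 0}
  have hO_open : ∀ j, IsOpen (O j) := fun j => by
    by_cases h : ∃ u ∈ U, ψ j u ≠ 0
    · simp only [O, h, true_implies]
      exact isOpen_ne_fun
        ((ψ j).continuous_of_finiteDimensional.comp continuous_subtype_val) continuous_const
    · simp only [O, h, false_implies, Set.ofPred_true, isOpen_univ]
  have hO_dense : ∀ j, Dense (O j) := fun j => by
    rw [Subtype.dense_iff]
    convert subset_closure_setOf_ne_zero hU (ψ j) using 2
    ext ξ; simp [O]; tauto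
  have hdense := (Set.finite_range O).dense_sInter (Set.forall_mem_range.2 hO_open)
    (Set.forall_mem_range.2 hO_dense)
  rw [Set.sInter_range, Subtype.dense_iff] at hdense
  convert hdense using 2
  ext ξ; simp [genericSet, O]; tauto

end Density

section Cover

variable {ι β κ E : Type*} [Fintype ι] [NormedAddCommGroup E] [NormedSpace ℝ E]
  [FiniteDimensional ℝ E]

theorem exists_cover_card_le_sum_choose {U : Set E} (hU : Convex ℝ U) {ψ : ι → E →ᵃ[ℝ] ℝ}
    {t : ℕ}
    (hdep : ∀ s : Finset ι, t < s.card → ¬ LinearIndependent ℝ fun j : s => (ψ j).linear)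
    {S : Finset β} {φ : β → κ → E →ᵃ[ℝ] ℝ} (hφ : ∀ y ∈ S, ∀ l, ZeroSetInFamily U ψ (φ y l))
    {G : β → E → ℝ} (hGc : ∀ y ∈ S, Continuous (G y)) (hG : ∀ y ∈ S, ConcaveOn ℝ U (G y))
    {r : ℝ} (hr : ∀ ξ ∈ U, ∃ y ∈ S, (∀ l, 0 ≤ φ y l ξ) ∧ G y ξ ≤ r) :
    ∃ T ⊆ S, T.card ≤ (finrank ℝ E + 1) * ∑ i ∈ Finset.Iic t, (Fintype.card ι).choose i ∧
      ∀ ξ ∈ U, ∃ y ∈ T, (∀ l, 0 ≤ φ y l ξ) ∧ G y ξ ≤ r := by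
  classical
  have h𝒜fin : (posPattern ψ '' genericSet U ψ).Finite :=
    Set.finite_univ.subset (Set.subset_univ _)
  set 𝒜 := h𝒜fin.toFinset
  have h𝒜 : 𝒜.card ≤ ∑ i ∈ Finset.Iic t, (Fintype.card ι).choose i :=
    card_le_sum_choose_of_subset_range_posPattern hdep
      (by rw [h𝒜fin.coe_toFinset]; exact Set.image_subset_range _ _)
  have hrep : ∀ σ ∈ 𝒜, ∃ ξ ∈ genericSet U ψ, posPattern ψ ξ = σ := fun σ hσ => by
    simpa [𝒜] using hσ
  choose! rep hrep_mem hrep_pat using hrep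
  have hcell : ∀ σ ∈ 𝒜, ∃ T ⊆ S, T.card ≤ finrank ℝ E + 1 ∧
      ∀ ξ ∈ signCell U ψ (rep σ), ∃ y ∈ T, (∀ l, 0 ≤ φ y l ξ) ∧ G y ξ ≤ r := fun σ hσ =>
    exists_cover_signCell hU hφ hG hr (hrep_mem σ hσ).1
  choose! T hTS hTcard hTcov using hcell
  refine ⟨𝒜.biUnion T, Finset.biUnion_subset.2 hTS, ?_, ?_⟩
  · calc (𝒜.biUnion T).card ≤ ∑ σ ∈ 𝒜, (T σ).card := Finset.card_biUnion_le
      _ ≤ 𝒜.card * (finrank ℝ E + 1) := Finset.sum_le_card_nsmul _ _ _ hTcard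
      _ ≤ _ := by rw [mul_comm]; exact Nat.mul_le_mul_left _ h𝒜
  set K := ⋃ y ∈ 𝒜.biUnion T, {ξ | (∀ l, 0 ≤ φ y l ξ) ∧ G y ξ ≤ r}
  have hK : IsClosed K := isClosed_biUnion_finset fun y hy => by
    rw [Set.ofPred_and, Set.ofPred_forall]
    exact (isClosed_iInter fun l => isClosed_le continuous_const
      (φ y l).continuous_of_finiteDimensional).inter
      (isClosed_le (hGc y (Finset.biUnion_subset.2 hTS hy)) continuous_const)
  have hgeneric : genericSet U ψ ⊆ K := fun ξ hξ => by
    have hσ : posPattern ψ ξ ∈ 𝒜 := by simpa [𝒜] using ⟨ξ, hξ, rfl⟩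
    obtain ⟨y, hy, hfeas⟩ := hTcov _ hσ ξ
      (mem_signCell_of_posPattern_eq (hrep_mem _ hσ) hξ (hrep_pat _ hσ).symm)
    exact Set.mem_biUnion (Finset.mem_biUnion.2 ⟨_, hσ, hy⟩) hfeas
  intro ξ hξ
  obtain ⟨y, hy, hfeas⟩ :=
    Set.mem_iUnion₂.1 (closure_minimal hgeneric hK (subset_closure_genericSet hU ψ hξ))
  exact ⟨y, hy, hfeas⟩

end Cover

section WorstCase

variable {Eξ Ey : Type*} {U : Set Eξ} {S : Set Ey} {F : Ey → Eξ → EReal}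

lemma worstValE_le_kValE (k : ℕ) : worstValE U S F ≤ kValE U S F k :=
  le_iInf₂ fun ys hys => iSup₂_mono fun _ _ =>
    le_iInf₂ fun _ ⟨i, hi⟩ => hi ▸ iInf₂_le (ys i) (hys i)

lemma kValE_le_of_forall_exists_le (hS : S.Nonempty) {T : Finset Ey} (hTS : ↑T ⊆ S) {k : ℕ}
    (hTk : T.card ≤ k) {c : EReal} (hT : ∀ ξ ∈ U, ∃ y ∈ T, F y ξ ≤ c) : kValE U S F k ≤ c := by
  obtain ⟨y₀, hy₀⟩ := hS
  set ys : Fin k → Ey := fun i => T.toList.getD i y₀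
  have hys : ∀ i, ys i ∈ S := fun i => by
    simp only [ys, List.getD_eq_getElem?_getD]
    cases h : T.toList[(i : ℕ)]? with
    | none => exact hy₀
    | some y => exact hTS (Finset.mem_toList.1 (List.mem_of_getElem? h))
  refine (iInf₂_le ys hys).trans (iSup₂_le fun ξ hξ => ?_)
  obtain ⟨y, hyT, hy⟩ := hT ξ hξ
  obtain ⟨n, hn, rfl⟩ := List.mem_iff_getElem.1 (Finset.mem_toList.2 hyT)
  have hnk : n < k := (Finset.length_toList T ▸ hn).trans_le hTk
  refine (iInf₂_le _ ⟨⟨n, hnk⟩, ?_⟩).trans hy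
  simp [ys, List.getElem?_eq_getElem hn]

theorem kValE_eq_worstValE_of_forall_lt (hS : S.Nonempty) {k : ℕ}
    (h : ∀ r : ℝ, worstValE U S F < r →
      ∃ T : Finset Ey, ↑T ⊆ S ∧ T.card ≤ k ∧ ∀ ξ ∈ U, ∃ y ∈ T, F y ξ ≤ r) :
    kValE U S F k = worstValE U S F := by
  refine le_antisymm (le_of_forall_gt_imp_ge_of_dense fun c hc => ?_) (worstValE_le_kValE k)
  induction c using EReal.rec with
  | bot => exact absurd hc not_lt_bot
  | coe r =>
    obtain ⟨T, hTS, hTk, hT⟩ := h r hc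
    exact kValE_le_of_forall_exists_le hS hTS hTk hT
  | top => exact le_top

lemma exists_lt_of_worstValE_lt {ξ : Eξ} (hξ : ξ ∈ U) {c : EReal} (h : worstValE U S F < c) :
    ∃ y ∈ S, F y ξ < c := by
  have : (⨅ y ∈ S, F y ξ) < c := (le_iSup₂ (f := fun ξ _ => ⨅ y ∈ S, F y ξ) ξ hξ).trans_lt h
  simpa only [iInf_lt_iff, exists_prop] using this

end WorstCase

lemma biInf_congr_and_eq_biInf_iff {α β : Type*} [CompleteLattice β] {X : Set α}
    {f g : α → β} (h : ∀ x ∈ X, f x = g x) :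
    (⨅ x ∈ X, f x) = (⨅ x ∈ X, g x) ∧
      ∀ x ∈ X, (f x = ⨅ x' ∈ X, f x' ↔ g x = ⨅ x' ∈ X, g x') := by
  have hinf : (⨅ x ∈ X, f x) = ⨅ x ∈ X, g x := iInf_congr fun x => iInf_congr (h x)
  exact ⟨hinf, fun x hx => by rw [h x hx, hinf]⟩

section TwoStage

variable {nx ny nξ m : ℕ} (hv : Fin m → ℤ) (H : Matrix (Fin m) (Fin nξ) ℤ)
  (A0 : Matrix (Fin m) (Fin nx) ℤ) (Ai : Fin nξ → Matrix (Fin m) (Fin nx) ℤ)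
  (B0 : Matrix (Fin m) (Fin ny) ℤ) (Bi : Fin nξ → Matrix (Fin m) (Fin ny) ℤ)

noncomputable def rowAff (x : Fin nx → ℝ) (y : Fin ny → ℝ) (l : Fin m) :
    (Fin nξ → ℝ) →ᵃ[ℝ] ℝ :=
  (∑ i, rowCoef H Ai Bi x y l i • LinearMap.proj i).toAffineMap -
    AffineMap.const ℝ (Fin nξ → ℝ) (rowRhs hv A0 B0 x y l)

variable {hv H A0 Ai B0 Bi}

lemma rowAff_apply {x : Fin nx → ℝ} {y : Fin ny → ℝ} {l : Fin m} {ξ : Fin nξ → ℝ} :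
    rowAff hv H A0 Ai B0 Bi x y l ξ =
      ∑ i, rowCoef H Ai Bi x y l i * ξ i - rowRhs hv A0 B0 x y l := by
  simp [rowAff]

lemma rowAff_linear {x : Fin nx → ℝ} {y : Fin ny → ℝ} {l : Fin m} :
    (rowAff hv H A0 Ai B0 Bi x y l).linear = ∑ i, rowCoef H Ai Bi x y l i • LinearMap.proj i := by
  simp [rowAff]

lemma rowAff_eq_slack {x : Fin nx → ℝ} {y : Fin ny → ℝ} {l : Fin m} {ξ : Fin nξ → ℝ} :
    rowAff hv H A0 Ai B0 Bi x y l ξ =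
      ((∑ j, ((A0 l j : ℝ) + ∑ i, ξ i * (Ai i l j : ℝ)) * x j) +
        ∑ j, ((B0 l j : ℝ) + ∑ i, ξ i * (Bi i l j : ℝ)) * y j) -
      ((hv l : ℝ) + ∑ i, (H l i : ℝ) * ξ i) := by
  have swap : ∀ {k : ℕ} (c : Fin nξ → Fin k → ℝ) (z : Fin k → ℝ),
      ∑ i, (∑ j, c i j * z j) * ξ i = ∑ j, (∑ i, ξ i * c i j) * z j := fun c z => by
    simp only [Finset.sum_mul]
    rw [Finset.sum_comm]
    exact Finset.sum_congr rfl fun j _ => Finset.sum_congr rfl fun i _ => by ring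
  simp only [rowAff_apply, rowCoef, rowRhs, add_mul, sub_mul, Finset.sum_add_distrib,
    Finset.sum_sub_distrib, swap]
  ring

lemma feasS_iff_forall_rowAff_nonneg {x : Fin nx → ℝ} {y : Fin ny → ℝ} {ξ : Fin nξ → ℝ} :
    FeasS hv H A0 Ai B0 Bi x y ξ ↔ ∀ l, 0 ≤ rowAff hv H A0 Ai B0 Bi x y l ξ :=
  forall_congr' fun _ => by rw [rowAff_eq_slack, sub_nonneg]

lemma fES_le_coe_iff {g : (Fin nx → ℝ) → (Fin ny → ℝ) → (Fin nξ → ℝ) → ℝ}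
    {x : Fin nx → ℝ} {y : Fin ny → ℝ} {ξ : Fin nξ → ℝ} {r : ℝ} :
    fES g hv H A0 Ai B0 Bi x y ξ ≤ r ↔
      (∀ l, 0 ≤ rowAff hv H A0 Ai B0 Bi x y l ξ) ∧ g x y ξ ≤ r := by
  rw [← feasS_iff_forall_rowAff_nonneg, fES]
  split_ifs with h <;> simp [h]

lemma rowAff_eq_zero_iff {x : Fin nx → ℝ} {y : Fin ny → ℝ} {l : Fin m} {ξ : Fin nξ → ℝ} :
    rowAff hv H A0 Ai B0 Bi x y l ξ = 0 ↔
      ξ ∈ {ξ | ∑ i, rowCoef H Ai Bi x y l i * ξ i = rowRhs hv A0 B0 x y l} := by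
  rw [rowAff_apply, sub_eq_zero, Set.mem_ofPred_eq]

lemma finite_hypSet {Yx : (Fin nx → ℝ) → Set (Fin ny → ℝ)} {U : Set (Fin nξ → ℝ)}
    {x : Fin nx → ℝ} (h : (Yx x).Finite) : (HypSet hv H A0 Ai B0 Bi Yx U x).Finite := by
  refine ((h.prod (Set.finite_univ (α := Fin m))).image fun p =>
    {ξ | ∑ i, rowCoef H Ai Bi x p.1 p.2 i * ξ i = rowRhs hv A0 B0 x p.1 p.2}).subset ?_
  rintro P ⟨y, hy, l, -, rfl, -⟩
  exact ⟨(y, l), ⟨hy, trivial⟩, rfl⟩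

lemma exists_zeroSetInFamily_rowAff {Yx : (Fin nx → ℝ) → Set (Fin ny → ℝ)}
    {U : Set (Fin nξ → ℝ)} (x : Fin nx → ℝ) :
    ∃ w : HypSet hv H A0 Ai B0 Bi Yx U x → (Fin ny → ℝ) × Fin m, ∀ y ∈ Yx x, ∀ l,
      ZeroSetInFamily U (fun P => rowAff hv H A0 Ai B0 Bi x (w P).1 (w P).2)
        (rowAff hv H A0 Ai B0 Bi x y l) := by
  have hw : ∀ P : HypSet hv H A0 Ai B0 Bi Yx U x, ∃ p : (Fin ny → ℝ) × Fin m,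
      ∀ ξ, rowAff hv H A0 Ai B0 Bi x p.1 p.2 ξ = 0 ↔ ξ ∈ (P : Set (Fin nξ → ℝ)) :=
    fun P => by
      obtain ⟨y, -, l, -, hP, -⟩ := P.2
      exact ⟨(y, l), fun ξ => by rw [rowAff_eq_zero_iff, ← hP]⟩
  choose w hw using hw
  refine ⟨w, fun y hy l ⟨z, hzU, hz⟩ => ?_⟩
  by_cases ha : rowCoef H Ai Bi x y l = 0
  · left
    intro ζ _
    rw [rowAff_apply] at hz ⊢
    simpa [ha] using hz
  · right
    exact ⟨⟨_, y, hy, l, ha, rfl, z, rowAff_eq_zero_iff.1 hz, hzU⟩,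
      fun ζ _ => by rw [hw, rowAff_eq_zero_iff]⟩

lemma not_linearIndependent_rowAff {ι : Type*} (x : Fin nx → ℝ) (w : ι → (Fin ny → ℝ) × Fin m)
    {t : ℕ} (ht : nξ ≤ t ∨ m ≤ t ∧ ∀ i, Bi i = 0) {s : Finset ι} (hs : t < s.card) :
    ¬ LinearIndependent ℝ fun j : s => (rowAff hv H A0 Ai B0 Bi x (w j).1 (w j).2).linear := by
  rcases ht with ht | ⟨ht, hB⟩
  · exact not_linearIndependent_linear_of_finrank_lt
      (fun j => rowAff hv H A0 Ai B0 Bi x (w j).1 (w j).2)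
      (by rw [Module.finrank_fin_fun]; exact ht.trans_lt hs)
  · intro hli
    obtain ⟨j, j', hne, heq⟩ :=
      Fintype.exists_ne_map_eq_of_card_lt (fun j : s => (w j).2)
        (by rw [Fintype.card_fin, Fintype.card_coe]; exact ht.trans_lt hs)
    refine hne (hli.injective ?_)
    have hcoef : ∀ y y', rowCoef H Ai Bi x y = rowCoef H Ai Bi x y' := fun y y' => by
      ext l i
      simp [rowCoef, hB]
    simp only [rowAff_linear, heq, hcoef (w j).1 (w j').1]

theorem kValE_eq_worstValE {Y : Set (Fin ny → ℝ)} (hYfin : Y.Finite)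
    {Yx : (Fin nx → ℝ) → Set (Fin ny → ℝ)} {U : Set (Fin nξ → ℝ)} (hU : Convex ℝ U)
    {g : (Fin nx → ℝ) → (Fin ny → ℝ) → (Fin nξ → ℝ) → ℝ}
    (hgc : Continuous fun p : (Fin nx → ℝ) × (Fin ny → ℝ) × (Fin nξ → ℝ) => g p.1 p.2.1 p.2.2)
    {x : Fin nx → ℝ} (hYxY : Yx x ⊆ Y) (hYx : (Yx x).Nonempty)
    (hg : ∀ y ∈ Y, ConcaveOn ℝ U (g x y)) {η : ℕ}
    (hη : Feasible2RO hv H A0 Ai B0 Bi Yx U x → (HypSet hv H A0 Ai B0 Bi Yx U x).ncard ≤ η)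
    {t : ℕ} (ht : nξ ≤ t ∨ m ≤ t ∧ ∀ i, Bi i = 0) {k : ℕ}
    (hk : min Y.ncard ((nξ + 1) * ∑ i ∈ Finset.range (t + 1), η.choose i) ≤ k) :
    kValE U (Yx x) (fES g hv H A0 Ai B0 Bi x) k =
      worstValE U (Yx x) (fES g hv H A0 Ai B0 Bi x) := by
  have hfin := hYfin.subset hYxY
  refine kValE_eq_worstValE_of_forall_lt hYx fun r hr => ?_
  have hcover : ∀ ξ ∈ U, ∃ y ∈ hfin.toFinset,
      (∀ l, 0 ≤ rowAff hv H A0 Ai B0 Bi x y l ξ) ∧ g x y ξ ≤ r := fun ξ hξ => by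
    obtain ⟨y, hy, hlt⟩ := exists_lt_of_worstValE_lt hξ hr
    exact ⟨y, hfin.mem_toFinset.2 hy, fES_le_coe_iff.1 hlt.le⟩
  suffices ∃ T ⊆ hfin.toFinset, T.card ≤ k ∧
      ∀ ξ ∈ U, ∃ y ∈ T, (∀ l, 0 ≤ rowAff hv H A0 Ai B0 Bi x y l ξ) ∧ g x y ξ ≤ r by
    obtain ⟨T, hT, hTk, hTcov⟩ := this
    refine ⟨T, fun y hy => hfin.mem_toFinset.1 (hT hy), hTk, fun ξ hξ => ?_⟩
    obtain ⟨y, hy, h⟩ := hTcov ξ hξ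
    exact ⟨y, hy, fES_le_coe_iff.2 h⟩
  rcases min_le_iff.1 hk with hYk | hNk
  · refine ⟨hfin.toFinset, subset_rfl, ?_, hcover⟩
    rw [← Set.ncard_eq_toFinset_card _ hfin]
    exact (Set.ncard_le_ncard hYxY hYfin).trans hYk
  have hfeas : Feasible2RO hv H A0 Ai B0 Bi Yx U x := fun ξ hξ => by
    obtain ⟨y, hy, h, -⟩ := hcover ξ hξ
    exact ⟨y, hfin.mem_toFinset.1 hy, feasS_iff_forall_rowAff_nonneg.2 h⟩
  have : Fintype (HypSet hv H A0 Ai B0 Bi Yx U x) := (finite_hypSet hfin).fintype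
  obtain ⟨w, hw⟩ : ∃ w : HypSet hv H A0 Ai B0 Bi Yx U x → _, _ :=
    exists_zeroSetInFamily_rowAff x
  obtain ⟨T, hTS, hTcard, hT⟩ := exists_cover_card_le_sum_choose hU
    (ψ := fun P => rowAff hv H A0 Ai B0 Bi x (w P).1 (w P).2)
    (fun _ => not_linearIndependent_rowAff x w ht)
    (fun y hy => hw y (hfin.mem_toFinset.1 hy))
    (fun y _ => hgc.comp (continuous_const.prodMk (continuous_const.prodMk continuous_id)))
    (fun y hy => hg y (hYxY (hfin.mem_toFinset.1 hy))) hcover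
  refine ⟨T, hTS, hTcard.trans (le_trans ?_ hNk), hT⟩
  have hcard : Fintype.card (HypSet hv H A0 Ai B0 Bi Yx U x) ≤ η := by
    rw [← Nat.card_eq_fintype_card, Nat.card_coe_set_eq]
    exact hη hfeas
  rw [Module.finrank_fin_fun, ← Nat.range_succ_eq_Iic]
  gcongr

end TwoStage

theorem stmt_11_general (nx ny nξ m : ℕ)
    (X : Set (Fin nx → ℝ))
    (Y : Set (Fin ny → ℝ)) (hYfin : Y.Finite)
    (Yx : (Fin nx → ℝ) → Set (Fin ny → ℝ))
    (hYxsub : ∀ x ∈ X, Yx x ⊆ Y) (hYxne : ∀ x ∈ X, (Yx x).Nonempty)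
    (U : Set (Fin nξ → ℝ)) (hUconv : Convex ℝ U)
    (g : (Fin nx → ℝ) → (Fin ny → ℝ) → (Fin nξ → ℝ) → ℝ)
    (hgcont : Continuous fun p : (Fin nx → ℝ) × (Fin ny → ℝ) × (Fin nξ → ℝ) =>
      g p.1 p.2.1 p.2.2)
    (hgconc : ∀ x ∈ X, ∀ y ∈ Y, ConcaveOn ℝ U (g x y))
    (hv : Fin m → ℤ) (H : Matrix (Fin m) (Fin nξ) ℤ)
    (A0 : Matrix (Fin m) (Fin nx) ℤ) (Ai : Fin nξ → Matrix (Fin m) (Fin nx) ℤ)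
    (B0 : Matrix (Fin m) (Fin ny) ℤ) (Bi : Fin nξ → Matrix (Fin m) (Fin ny) ℤ)
    (η : ℕ)
    (hηb : ∀ x ∈ X, Feasible2RO hv H A0 Ai B0 Bi Yx U x →
      (HypSet hv H A0 Ai B0 Bi Yx U x).ncard ≤ η) :
    ((∀ i, Bi i = 0) → ∀ k : ℕ,
      min Y.ncard ((nξ + 1) * ∑ i ∈ Finset.range (min m nξ + 1), Nat.choose η i) ≤ k →
      (⨅ x ∈ X, kValE U (Yx x) (fES g hv H A0 Ai B0 Bi x) k) =
        (⨅ x ∈ X, worstValE U (Yx x) (fES g hv H A0 Ai B0 Bi x)) ∧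
      (∀ x ∈ X,
        kValE U (Yx x) (fES g hv H A0 Ai B0 Bi x) k =
          (⨅ x' ∈ X, kValE U (Yx x') (fES g hv H A0 Ai B0 Bi x') k) ↔
        worstValE U (Yx x) (fES g hv H A0 Ai B0 Bi x) =
          (⨅ x' ∈ X, worstValE U (Yx x') (fES g hv H A0 Ai B0 Bi x')))) ∧
    (∀ k : ℕ,
      min Y.ncard ((nξ + 1) * ∑ i ∈ Finset.range (nξ + 1), Nat.choose η i) ≤ k →
      (⨅ x ∈ X, kValE U (Yx x) (fES g hv H A0 Ai B0 Bi x) k) =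
        (⨅ x ∈ X, worstValE U (Yx x) (fES g hv H A0 Ai B0 Bi x)) ∧
      (∀ x ∈ X,
        kValE U (Yx x) (fES g hv H A0 Ai B0 Bi x) k =
          (⨅ x' ∈ X, kValE U (Yx x') (fES g hv H A0 Ai B0 Bi x') k) ↔
        worstValE U (Yx x) (fES g hv H A0 Ai B0 Bi x) =
          (⨅ x' ∈ X, worstValE U (Yx x') (fES g hv H A0 Ai B0 Bi x')))) := by
  have key : ∀ t, (nξ ≤ t ∨ m ≤ t ∧ ∀ i, Bi i = 0) → ∀ k,
      min Y.ncard ((nξ + 1) * ∑ i ∈ Finset.range (t + 1), η.choose i) ≤ k → ∀ x ∈ X,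
      kValE U (Yx x) (fES g hv H A0 Ai B0 Bi x) k =
        worstValE U (Yx x) (fES g hv H A0 Ai B0 Bi x) := fun t ht k hk x hx =>
    kValE_eq_worstValE hYfin hUconv hgcont (hYxsub x hx) (hYxne x hx) (hgconc x hx)
      (hηb x hx) ht hk
  refine ⟨fun hB k hk => biInf_congr_and_eq_biInf_iff (key _ ?_ k hk),
    fun k hk => biInf_congr_and_eq_biInf_iff (key nξ (Or.inl le_rfl) k hk)⟩
  rcases le_total m nξ with h | h
  · exact Or.inr ⟨le_min le_rfl h, hB⟩
  · exact Or.inl (le_min h le_rfl)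

/-- With continuous `g`, concave in `ξ`, and structured uncertain constraints,
the `k`-adaptability problem has the same optimal value and the same optimal first-stage
solutions as the two-stage robust problem whenever
`k ≥ min{|Y|, (n_ξ+1)·Σ_{i=0}^{min{m,n_ξ}} C(η,i)}` in the fixed-recourse case (`Bⁱ = 0`), and
whenever `k ≥ min{|Y|, (n_ξ+1)·Σ_{i=0}^{n_ξ} C(η,i)}` in the general random-recourse case. -/
theorem stmt_11 (nx ny nξ m : ℕ) (hnx : 0 < nx) (hny : 0 < ny) (hnξ : 0 < nξ) (hm0 : 0 < m)
    (X : Set (Fin nx → ℝ)) (hXcomp : IsCompact X) (hXne : X.Nonempty)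
    (Y : Set (Fin ny → ℝ)) (hYfin : Y.Finite) (hYne : Y.Nonempty)
    (hYint : ∀ y ∈ Y, ∀ i, ∃ z : ℤ, y i = (z : ℝ))
    (Yx : (Fin nx → ℝ) → Set (Fin ny → ℝ))
    (hYxsub : ∀ x ∈ X, Yx x ⊆ Y) (hYxne : ∀ x ∈ X, (Yx x).Nonempty)
    (U : Set (Fin nξ → ℝ)) (hUcomp : IsCompact U) (hUconv : Convex ℝ U) (hUne : U.Nonempty)
    (g : (Fin nx → ℝ) → (Fin ny → ℝ) → (Fin nξ → ℝ) → ℝ)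
    (hgcont : Continuous fun p : (Fin nx → ℝ) × (Fin ny → ℝ) × (Fin nξ → ℝ) =>
      g p.1 p.2.1 p.2.2)
    (hgconc : ∀ x ∈ X, ∀ y ∈ Y, ConcaveOn ℝ U (g x y))
    (hv : Fin m → ℤ) (H : Matrix (Fin m) (Fin nξ) ℤ)
    (A0 : Matrix (Fin m) (Fin nx) ℤ) (Ai : Fin nξ → Matrix (Fin m) (Fin nx) ℤ)
    (B0 : Matrix (Fin m) (Fin ny) ℤ) (Bi : Fin nξ → Matrix (Fin m) (Fin ny) ℤ)
    (hfeas : ∃ x ∈ X, Feasible2RO hv H A0 Ai B0 Bi Yx U x)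
    (η : ℕ) (hη1 : 1 ≤ η)
    (hηb : ∀ x ∈ X, Feasible2RO hv H A0 Ai B0 Bi Yx U x →
      (HypSet hv H A0 Ai B0 Bi Yx U x).ncard ≤ η) :
    ((∀ i, Bi i = 0) → ∀ k : ℕ,
      min Y.ncard ((nξ + 1) * ∑ i ∈ Finset.range (min m nξ + 1), Nat.choose η i) ≤ k →
      (⨅ x ∈ X, kValE U (Yx x) (fES g hv H A0 Ai B0 Bi x) k) =
        (⨅ x ∈ X, worstValE U (Yx x) (fES g hv H A0 Ai B0 Bi x)) ∧
      (∀ x ∈ X,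
        kValE U (Yx x) (fES g hv H A0 Ai B0 Bi x) k =
          (⨅ x' ∈ X, kValE U (Yx x') (fES g hv H A0 Ai B0 Bi x') k) ↔
        worstValE U (Yx x) (fES g hv H A0 Ai B0 Bi x) =
          (⨅ x' ∈ X, worstValE U (Yx x') (fES g hv H A0 Ai B0 Bi x')))) ∧
    (∀ k : ℕ,
      min Y.ncard ((nξ + 1) * ∑ i ∈ Finset.range (nξ + 1), Nat.choose η i) ≤ k →
      (⨅ x ∈ X, kValE U (Yx x) (fES g hv H A0 Ai B0 Bi x) k) =
        (⨅ x ∈ X, worstValE U (Yx x) (fES g hv H A0 Ai B0 Bi x)) ∧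
      (∀ x ∈ X,
        kValE U (Yx x) (fES g hv H A0 Ai B0 Bi x) k =
          (⨅ x' ∈ X, kValE U (Yx x') (fES g hv H A0 Ai B0 Bi x') k) ↔
        worstValE U (Yx x) (fES g hv H A0 Ai B0 Bi x) =
          (⨅ x' ∈ X, worstValE U (Yx x') (fES g hv H A0 Ai B0 Bi x')))) :=
  stmt_11_general nx ny nξ m X Y hYfin Yx hYxsub hYxne U hUconv g hgcont hgconc hv H A0 Ai B0 Bi η
    hηb
end

section
/- Assume g is L-Lipschitz in y with L > 0, i.e., |g(x,y,ξ) − g(x,y′,ξ)| ≤ L·‖y − y′‖ for all x ∈ X, ξ ∈ U, y, y′ ∈ Y, assume for every x ∈ X there exist R convex recourse-stable regions D_1,…,D_R ⊆ U with cl(D_1) ∪ … ∪ cl(D_R) = U, and assume at least one x ∈ X is feasible for 2RO-C. Then for every integer s with 1 ≤ s ≤ n_ξ + 1 it holds that opt(R·s) − opt(2RO-C) ≤ L · diam(Y) · ln((n_ξ+1)/s), where diam(Y) = max_{y,y′∈Y} ‖y − y′‖. -/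
/-!
Fix a first stage `x` and a level `v` above its worst-case value. On a recourse-stable region
`D` the responses feasible somewhere on `D` are feasible on all of `cl D`, and at every point of
`cl D` one of them has cost at most `v`. Helly's theorem reduces them to at most `n_ξ + 1`
responses, and Sion's minimax theorem yields a mixture `λ` of these with `∑ λ_y g(y, ·) ≤ v`
on `cl D`. Discard the lightest response until `s` remain: the lightest of `N + 1` weights is
at most `1 / (N + 1)`, so the discarded weight is at most
`∑_{N=s}^{n_ξ} 1 / (N + 1) ≤ ln ((n_ξ + 1) / s)`. Since two responses differ in cost by at most
`L · diam Y`, the cheapest kept response costs at most `v + L · diam Y · ln ((n_ξ + 1) / s)`.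
The `s` responses kept for each of the `R` regions form an `R · s`-adaptable policy.
-/

noncomputable section

variable {nx ny nξ m : ℕ}

/-- Feasibility of `(x, y)` under scenario `ξ`: `A(ξ)x + B(ξ)y ≥ h(ξ)` componentwise. -/
def Feas (A : (Fin nξ → ℝ) →ᵃ[ℝ] Matrix (Fin m) (Fin nx) ℝ)
    (B : (Fin nξ → ℝ) →ᵃ[ℝ] Matrix (Fin m) (Fin ny) ℝ)
    (hm : (Fin nξ → ℝ) →ᵃ[ℝ] (Fin m → ℝ))
    (x : Fin nx → ℝ) (y : EuclideanSpace ℝ (Fin ny)) (ξ : Fin nξ → ℝ) : Prop :=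
  ∀ l, hm ξ l ≤ (∑ j, A ξ l j * x j) + ∑ j, B ξ l j * y j

open Classical in
/-- `f(x,y,ξ) = g(x,y,ξ)` if `A(ξ)x + B(ξ)y ≥ h(ξ)` and `+∞` otherwise. -/
def fE (g : (Fin nx → ℝ) → EuclideanSpace ℝ (Fin ny) → (Fin nξ → ℝ) → ℝ)
    (A : (Fin nξ → ℝ) →ᵃ[ℝ] Matrix (Fin m) (Fin nx) ℝ)
    (B : (Fin nξ → ℝ) →ᵃ[ℝ] Matrix (Fin m) (Fin ny) ℝ)
    (hm : (Fin nξ → ℝ) →ᵃ[ℝ] (Fin m → ℝ))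
    (x : Fin nx → ℝ) (y : EuclideanSpace ℝ (Fin ny)) (ξ : Fin nξ → ℝ) : EReal :=
  if Feas A B hm x y ξ then ((g x y ξ : ℝ) : EReal) else ⊤

/-- A convex set `D` is recourse-stable for `x`. -/
def RecourseStable (A : (Fin nξ → ℝ) →ᵃ[ℝ] Matrix (Fin m) (Fin nx) ℝ)
    (B : (Fin nξ → ℝ) →ᵃ[ℝ] Matrix (Fin m) (Fin ny) ℝ)
    (hm : (Fin nξ → ℝ) →ᵃ[ℝ] (Fin m → ℝ))
    (Yx : (Fin nx → ℝ) → Set (EuclideanSpace ℝ (Fin ny)))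
    (x : Fin nx → ℝ) (D : Set (Fin nξ → ℝ)) : Prop :=
  ∀ y ∈ Yx x, (∀ ξ ∈ D, Feas A B hm x y ξ) ∨ (∀ ξ ∈ D, ¬ Feas A B hm x y ξ)

end

open Finset

theorem Finset.exists_subset_card_eq_sum_sdiff_le {ι : Type*} [DecidableEq ι] (w : ι → ℝ)
    (hw : ∀ i, 0 ≤ w i) {s : ℕ} (hs : 0 < s) (S : Finset ι) (hsS : s ≤ #S) :
    ∃ T ⊆ S, #T = s ∧ ∑ i ∈ S \ T, w i ≤ (∑ i ∈ S, w i) * Real.log (#S / s) := by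
  generalize hN : #S = N at hsS
  induction N, hsS using Nat.le_induction generalizing S with
  | base => exact ⟨S, subset_rfl, hN, by simp⟩
  | succ N hsN ih =>
    obtain ⟨j, hjS, hjmin⟩ := S.exists_min_image w (card_pos.1 (by omega))
    obtain ⟨T, hTS, hTs, hT⟩ := ih (S.erase j) (by rw [card_erase_of_mem hjS, hN]; rfl)
    refine ⟨T, hTS.trans (erase_subset j S), hTs, ?_⟩
    have hN0 : (0 : ℝ) < N := by exact_mod_cast hs.trans_le hsN
    have hs0 : (0 : ℝ) < s := by exact_mod_cast hs
    have hwj : ((N : ℝ) + 1) * w j ≤ ∑ i ∈ S, w i := by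
      simpa [hN] using card_nsmul_le_sum S w (w j) hjmin
    have hlog : 1 / ((N : ℝ) + 1) ≤ Real.log ((N + 1) / s) - Real.log (N / s) := by
      rw [← Real.log_div (by positivity) (by positivity)]
      have := Real.one_sub_inv_le_log_of_pos (x := (N + 1) / N) (by positivity)
      convert this using 2 <;> field_simp
      ring
    have hsplit : ∑ i ∈ S \ T, w i = w j + ∑ i ∈ S.erase j \ T, w i := by
      rw [sum_sdiff_eq_sub (hTS.trans (erase_subset j S)), sum_sdiff_eq_sub hTS,
        ← add_sum_erase S w hjS]
      ring
    have hσ : ∑ i ∈ S.erase j, w i ≤ ∑ i ∈ S, w i :=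
      sum_le_sum_of_subset_of_nonneg (erase_subset j S) fun i _ _ => hw i
    have hlogN : 0 ≤ Real.log (N / s) :=
      Real.log_nonneg ((one_le_div hs0).2 (by exact_mod_cast hsN))
    have hσ0 : 0 ≤ ∑ i ∈ S, w i := sum_nonneg fun i _ => hw i
    rw [hsplit]
    push_cast
    calc w j + ∑ i ∈ S.erase j \ T, w i
        ≤ (∑ i ∈ S, w i) * (1 / (N + 1)) + (∑ i ∈ S, w i) * Real.log (N / s) := by
          gcongr ?_ + ?_
          · rw [mul_one_div, le_div_iff₀ (by positivity)]; linarith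
          · exact hT.trans (mul_le_mul_of_nonneg_right hσ hlogN)
      _ ≤ (∑ i ∈ S, w i) * Real.log ((N + 1) / s) := by nlinarith

theorem exists_finset_card_le_forall_exists_le_of_mem_stdSimplex {ι α : Type*} [Fintype ι]
    {w : ι → ℝ} (hw : w ∈ stdSimplex ℝ ι) {K s : ℕ} (hs : 0 < s) (hsK : s ≤ K)
    (hK : Fintype.card ι ≤ K) {C : Set α} {G : ι → α → ℝ} {v Dc : ℝ}
    (hsum : ∀ ξ ∈ C, ∑ i, w i * G i ξ ≤ v) (hpair : ∀ i j, ∀ ξ ∈ C, G i ξ - G j ξ ≤ Dc) :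
    ∃ T : Finset ι, #T ≤ s ∧ ∀ ξ ∈ C, ∃ i ∈ T, G i ξ ≤ v + Dc * Real.log (K / s) := by
  classical
  have hs0 : (0 : ℝ) < s := by exact_mod_cast hs
  have hKs : (s : ℝ) ≤ K := by exact_mod_cast hsK
  obtain ⟨T, hTs, hTne, htail⟩ : ∃ T : Finset ι, #T ≤ s ∧ T.Nonempty ∧
      ∑ i ∈ univ \ T, w i ≤ Real.log (K / s) := by
    rcases le_total s (Fintype.card ι) with hsι | hιs
    · obtain ⟨T, -, hTs, hT⟩ := univ.exists_subset_card_eq_sum_sdiff_le w hw.1 hs hsι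
      refine ⟨T, hTs.le, card_pos.1 (hTs ▸ hs), hT.trans ?_⟩
      rw [hw.2, one_mul, card_univ]
      have hcard : (0 : ℝ) < Fintype.card ι := by exact_mod_cast hs.trans_le hsι
      exact Real.log_le_log (div_pos hcard hs0) (by gcongr)
    · have : Nonempty ι := by
        by_contra h
        simpa [not_nonempty_iff.1 h] using hw.2
      refine ⟨univ, hιs, univ_nonempty, ?_⟩
      rw [sdiff_self, bot_eq_empty, sum_empty]
      exact Real.log_nonneg ((one_le_div hs0).2 hKs)
  refine ⟨T, hTs, fun ξ hξ => ?_⟩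
  obtain ⟨i, hiT, hmin⟩ := T.exists_min_image (G · ξ) hTne
  refine ⟨i, hiT, ?_⟩
  have hDc : 0 ≤ Dc := by simpa using hpair i i ξ hξ
  have hin : ∑ j ∈ T, w j * G i ξ ≤ ∑ j ∈ T, w j * G j ξ :=
    sum_le_sum fun j hj => mul_le_mul_of_nonneg_left (hmin j hj) (hw.1 j)
  have hout : ∑ j ∈ univ \ T, w j * (G i ξ - Dc) ≤ ∑ j ∈ univ \ T, w j * G j ξ :=
    sum_le_sum fun j _ => mul_le_mul_of_nonneg_left (by linarith [hpair i j ξ hξ]) (hw.1 j)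
  have hweights := sum_sdiff (subset_univ T) (f := w)
  have hvalues := sum_sdiff (subset_univ T) (f := fun j => w j * G j ξ)
  rw [hw.2] at hweights
  rw [← sum_mul] at hin hout
  calc G i ξ = (∑ j ∈ T, w j) * G i ξ + (∑ j ∈ univ \ T, w j) * (G i ξ - Dc)
        + Dc * ∑ j ∈ univ \ T, w j := by linear_combination (G i ξ) * hweights.symm
    _ ≤ v + Dc * Real.log (K / s) := by
      gcongr
      linarith [hsum ξ hξ]

theorem ConcaveOn.fun_sum {ι E : Type*} [AddCommGroup E] [Module ℝ E] {s : Set E}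
    (hs : Convex ℝ s) (t : Finset ι) {f : ι → E → ℝ} (hf : ∀ i ∈ t, ConcaveOn ℝ s (f i)) :
    ConcaveOn ℝ s (fun x => ∑ i ∈ t, f i x) := by
  classical
  induction t using Finset.induction_on with
  | empty => simpa using concaveOn_const 0 hs
  | insert a t hat ih =>
    simp only [sum_insert hat]
    exact (hf a (mem_insert_self a t)).add (ih fun i hi => hf i (mem_insert_of_mem hi))

theorem exists_mem_stdSimplex_forall_sum_mul_le {ι E : Type*} [Fintype ι] [TopologicalSpace E]
    [AddCommGroup E] [Module ℝ E] [IsTopologicalAddGroup E] [ContinuousSMul ℝ E] {C : Set E}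
    (hCne : C.Nonempty) (hCc : Convex ℝ C) (hCk : IsCompact C) {G : ι → E → ℝ}
    (hcont : ∀ i, ContinuousOn (G i) C) (hconc : ∀ i, ConcaveOn ℝ C (G i)) {v : ℝ}
    (hmin : ∀ ξ ∈ C, ∃ i, G i ξ ≤ v) :
    ∃ w ∈ stdSimplex ℝ ι, ∀ ξ ∈ C, ∑ i, w i * G i ξ ≤ v := by
  classical
  obtain ⟨ξ₀, hξ₀⟩ := hCne
  have : Nonempty ι := ⟨(hmin ξ₀ hξ₀).choose⟩
  obtain ⟨w, hw, ξ, hξ, hsaddle⟩ := Sion.exists_isSaddlePointOn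
    (f := fun (w : ι → ℝ) ξ => ∑ i, w i * G i ξ)
    (ne_X := ⟨_, single_mem_stdSimplex ℝ (Classical.arbitrary ι)⟩)
    (cX := convex_stdSimplex ℝ ι) (kX := isCompact_stdSimplex ℝ ι)
    (hfy := fun ξ _ => (by fun_prop : Continuous _).lowerSemicontinuous.lowerSemicontinuousOn _)
    (hfy' := fun ξ _ => ConvexOn.quasiconvexOn ⟨convex_stdSimplex ℝ ι,
      fun x _ y _ a b _ _ _ => le_of_eq (by
        simp only [Pi.add_apply, Pi.smul_apply, smul_eq_mul, add_mul, sum_add_distrib, mul_sum,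
          mul_assoc])⟩)
    (cY := hCc) (ne_Y := ⟨ξ₀, hξ₀⟩) (kY := hCk)
    (hfx := fun w _ => (continuousOn_finsetSum _ fun i _ =>
      continuousOn_const.mul (hcont i)).upperSemicontinuousOn)
    (hfx' := fun w hw => (ConcaveOn.fun_sum hCc _ fun i _ =>
      (hconc i).smul (hw.1 i)).quasiconcaveOn)
  refine ⟨w, hw, fun ξ' hξ' => ?_⟩
  obtain ⟨i, hi⟩ := hmin ξ hξ
  calc ∑ j, w j * G j ξ' ≤ ∑ j, (Pi.single i 1 : ι → ℝ) j * G j ξ :=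
        hsaddle _ (single_mem_stdSimplex ℝ i) ξ' hξ'
    _ = G i ξ := by simp [Pi.single_apply]
    _ ≤ v := hi

theorem exists_subset_card_le_finrank_forall_exists_le {ι E : Type*} [AddCommGroup E]
    [Module ℝ E] [FiniteDimensional ℝ E] {C : Set E} (S : Finset ι) {G : ι → E → ℝ}
    (hconc : ∀ i ∈ S, ConcaveOn ℝ C (G i)) {v : ℝ} (hmin : ∀ ξ ∈ C, ∃ i ∈ S, G i ξ ≤ v) :
    ∃ I ⊆ S, #I ≤ Module.finrank ℝ E + 1 ∧ ∀ ξ ∈ C, ∃ i ∈ I, G i ξ ≤ v := by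
  by_contra! h
  obtain ⟨ξ₀, hξ₀, -⟩ := h ∅ (empty_subset S) (by simp)
  obtain ⟨i₀, hi₀, -⟩ := hmin ξ₀ hξ₀
  obtain ⟨ξ, hξ⟩ := Convex.helly_theorem' (F := fun i => {ξ ∈ C | v < G i ξ})
    (fun i hi => (hconc i hi).convex_gt v) fun I hIS hI => by
      obtain ⟨ξ, hξC, hξ⟩ := h I hIS hI
      exact ⟨ξ, Set.mem_iInter₂.2 fun i hi => ⟨hξC, hξ i hi⟩⟩
  rw [Set.mem_iInter₂] at hξ
  obtain ⟨i, hi, hle⟩ := hmin ξ (hξ i₀ hi₀).1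
  exact (hξ i hi).2.not_ge hle

theorem exists_finset_card_le_forall_exists_le_add_mul_log {ι E : Type*} [TopologicalSpace E]
    [AddCommGroup E] [Module ℝ E] [IsTopologicalAddGroup E] [ContinuousSMul ℝ E]
    [FiniteDimensional ℝ E] {C : Set E} (hCc : Convex ℝ C) (hCk : IsCompact C) (S : Finset ι)
    {G : ι → E → ℝ} (hcont : ∀ i ∈ S, ContinuousOn (G i) C)
    (hconc : ∀ i ∈ S, ConcaveOn ℝ C (G i)) {v Dc : ℝ} (hmin : ∀ ξ ∈ C, ∃ i ∈ S, G i ξ ≤ v)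
    (hpair : ∀ i ∈ S, ∀ j ∈ S, ∀ ξ ∈ C, G i ξ - G j ξ ≤ Dc) {s : ℕ} (hs : 0 < s)
    (hsK : s ≤ Module.finrank ℝ E + 1) :
    ∃ T ⊆ S, #T ≤ s ∧
      ∀ ξ ∈ C, ∃ i ∈ T, G i ξ ≤ v + Dc * Real.log ((Module.finrank ℝ E + 1) / s) := by
  rcases C.eq_empty_or_nonempty with rfl | hCne
  · exact ⟨∅, empty_subset S, by simp, by simp⟩
  obtain ⟨I, hIS, hIcard, hI⟩ := exists_subset_card_le_finrank_forall_exists_le S hconc hmin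
  obtain ⟨w, hw, hsum⟩ := exists_mem_stdSimplex_forall_sum_mul_le (G := fun i : I => G i)
    hCne hCc hCk (fun i => hcont i (hIS i.2)) (fun i => hconc i (hIS i.2)) fun ξ hξ => by
      obtain ⟨i, hi, hle⟩ := hI ξ hξ
      exact ⟨⟨i, hi⟩, hle⟩
  obtain ⟨T, hTs, hT⟩ := exists_finset_card_le_forall_exists_le_of_mem_stdSimplex hw hs hsK
    (by simpa using hIcard) hsum fun i j ξ hξ => hpair i (hIS i.2) j (hIS j.2) ξ hξ
  refine ⟨T.map (Function.Embedding.subtype _), fun i hi => ?_, by simpa using hTs,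
    fun ξ hξ => ?_⟩
  · obtain ⟨j, -, rfl⟩ := mem_map.1 hi
    exact hIS j.2
  · obtain ⟨i, hiT, hle⟩ := hT ξ hξ
    exact ⟨i, mem_map_of_mem _ hiT, by exact_mod_cast hle⟩

theorem kValE_le_worstValE_of_subset {Eξ Ey : Type*} (U : Set Eξ) {S : Set Ey}
    (F : Ey → Eξ → EReal) {k : ℕ} (hS : S.Nonempty) (T : Finset Ey) (hTS : ↑T ⊆ S)
    (hk : #T ≤ k) : kValE U S F k ≤ worstValE U T F := by
  obtain ⟨y₀, hy₀⟩ := hS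
  let y : Fin k → Ey := fun i => if h : (i : ℕ) < T.toList.length then T.toList[(i : ℕ)] else y₀
  have hyS : ∀ i, y i ∈ S := fun i => by
    by_cases h : (i : ℕ) < T.toList.length
    · simpa only [y, dif_pos h] using hTS (mem_toList.1 (List.getElem_mem h))
    · simpa only [y, dif_neg h] using hy₀
  have hTy : (T : Set Ey) ⊆ Set.range y := fun z hz => by
    obtain ⟨n, hn, rfl⟩ := List.mem_iff_getElem.1 (mem_toList.2 hz)
    exact ⟨⟨n, hn.trans_le (by simpa using hk)⟩, by simp only [y, dif_pos hn]⟩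
  calc kValE U S F k ≤ worstValE U (Set.range y) F := iInf₂_le y hyS
    _ ≤ worstValE U T F := iSup₂_mono fun ξ _ => biInf_mono hTy

section RecourseStable

variable {nx ny nξ m : ℕ} {A : (Fin nξ → ℝ) →ᵃ[ℝ] Matrix (Fin m) (Fin nx) ℝ}
  {B : (Fin nξ → ℝ) →ᵃ[ℝ] Matrix (Fin m) (Fin ny) ℝ} {hm : (Fin nξ → ℝ) →ᵃ[ℝ] (Fin m → ℝ)}

theorem isClosed_setOf_feas (x : Fin nx → ℝ) (y : EuclideanSpace ℝ (Fin ny)) :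
    IsClosed {ξ | Feas A B hm x y ξ} := by
  have hA := AffineMap.continuous_linear_iff.1 A.linear.continuous_of_finiteDimensional
  have hB := AffineMap.continuous_linear_iff.1 B.linear.continuous_of_finiteDimensional
  have hh := AffineMap.continuous_linear_iff.1 hm.linear.continuous_of_finiteDimensional
  simp only [Feas, Set.ofPred_forall]
  exact isClosed_iInter fun l => isClosed_le (by fun_prop) (by fun_prop)


variable {g : (Fin nx → ℝ) → EuclideanSpace ℝ (Fin ny) → (Fin nξ → ℝ) → ℝ}
  {Yx : (Fin nx → ℝ) → Set (EuclideanSpace ℝ (Fin ny))} {x : Fin nx → ℝ} {v Dc : ℝ} {s : ℕ}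

theorem exists_finset_forall_mem_closure_feas_le {D : Set (Fin nξ → ℝ)} (hYx : (Yx x).Finite)
    (hDconv : Convex ℝ D) (hDk : IsCompact (closure D)) (hD : RecourseStable A B hm Yx x D)
    (hcont : ∀ y, Continuous (g x y)) (hconc : ∀ y ∈ Yx x, ConcaveOn ℝ (closure D) (g x y))
    (hpair : ∀ y ∈ Yx x, ∀ y' ∈ Yx x, ∀ ξ ∈ closure D, g x y ξ - g x y' ξ ≤ Dc)
    (hv : ∀ ξ ∈ D, ⨅ y ∈ Yx x, fE g A B hm x y ξ < v) (hs : 0 < s) (hsK : s ≤ nξ + 1) :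
    ∃ T : Finset (EuclideanSpace ℝ (Fin ny)), ↑T ⊆ Yx x ∧ #T ≤ s ∧ ∀ ξ ∈ closure D,
      ∃ y ∈ T, Feas A B hm x y ξ ∧ g x y ξ ≤ v + Dc * Real.log ((nξ + 1) / s) := by
  classical
  set S := hYx.toFinset.filter fun y => ∀ ξ ∈ D, Feas A B hm x y ξ
  have hS : ∀ y ∈ S, y ∈ Yx x ∧ ∀ ξ ∈ closure D, Feas A B hm x y ξ := fun y hy => by
    rw [mem_filter, Set.Finite.mem_toFinset] at hy
    exact ⟨hy.1, fun ξ hξ => closure_minimal hy.2 (isClosed_setOf_feas x y) hξ⟩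
  have hminD : ∀ ξ ∈ D, ∃ y ∈ S, g x y ξ ≤ v := fun ξ hξ => by
    obtain ⟨y, hy, hlt⟩ := lt_biInf_iff.1 (hv ξ hξ)
    have hF : Feas A B hm x y ξ := by
      by_contra hF
      simp [fE, hF] at hlt
    rw [fE, if_pos hF, EReal.coe_lt_coe_iff] at hlt
    exact ⟨y, mem_filter.2 ⟨hYx.mem_toFinset.2 hy,
      (hD y hy).resolve_right fun h => h ξ hξ hF⟩, hlt.le⟩
  have hminC : ∀ ξ ∈ closure D, ∃ y ∈ S, g x y ξ ≤ v := by
    have : closure D ⊆ ⋃ y ∈ S, {ξ | g x y ξ ≤ v} :=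
      closure_minimal (fun ξ hξ => by simpa using hminD ξ hξ)
        (isClosed_biUnion_finset fun y _ => isClosed_le (hcont y) continuous_const)
    simpa [Set.subset_def] using this
  obtain ⟨T, hTS, hTs, hT⟩ := exists_finset_card_le_forall_exists_le_add_mul_log hDconv.closure
    hDk S (fun y _ => (hcont y).continuousOn) (fun y hy => hconc y (hS y hy).1) hminC
    (fun y hy y' hy' => hpair y (hS y hy).1 y' (hS y' hy').1) hs (by simpa using hsK)
  refine ⟨T, fun y hy => (hS y (hTS hy)).1, hTs, fun ξ hξ => ?_⟩
  obtain ⟨y, hy, hle⟩ := hT ξ hξ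
  exact ⟨y, hy, (hS y (hTS hy)).2 ξ hξ, by simpa using hle⟩

theorem kValE_le_of_worstValE_lt {U : Set (Fin nξ → ℝ)} {R : ℕ} (D : Fin R → Set (Fin nξ → ℝ))
    (hD : ∀ t, Convex ℝ (D t) ∧ RecourseStable A B hm Yx x (D t))
    (hcover : ⋃ t, closure (D t) = U) (hUk : IsCompact U) (hYx : (Yx x).Finite)
    (hYxne : (Yx x).Nonempty) (hcont : ∀ y, Continuous (g x y))
    (hconc : ∀ y ∈ Yx x, ConcaveOn ℝ U (g x y))
    (hpair : ∀ y ∈ Yx x, ∀ y' ∈ Yx x, ∀ ξ ∈ U, g x y ξ - g x y' ξ ≤ Dc)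
    (hv : worstValE U (Yx x) (fE g A B hm x) < v) (hs : 0 < s) (hsK : s ≤ nξ + 1) :
    kValE U (Yx x) (fE g A B hm x) (R * s) ≤
      ((v + Dc * Real.log ((nξ + 1) / s) : ℝ) : EReal) := by
  classical
  have hDU : ∀ t, closure (D t) ⊆ U := fun t =>
    hcover ▸ Set.subset_iUnion (fun t => closure (D t)) t
  have hvD : ∀ t, ∀ ξ ∈ D t, ⨅ y ∈ Yx x, fE g A B hm x y ξ < v := fun t ξ hξ =>
    (le_iSup₂ (f := fun ξ _ => ⨅ y ∈ Yx x, fE g A B hm x y ξ) ξ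
      (hDU t (subset_closure hξ))).trans_lt hv
  choose T hTY hTs hT using fun t => exists_finset_forall_mem_closure_feas_le hYx (hD t).1
    (hUk.of_isClosed_subset isClosed_closure (hDU t)) (hD t).2 hcont
    (fun y hy => (hconc y hy).subset (hDU t) (hD t).1.closure)
    (fun y hy y' hy' ξ hξ => hpair y hy y' hy' ξ (hDU t hξ)) (hvD t) hs hsK
  calc kValE U (Yx x) (fE g A B hm x) (R * s)
      ≤ worstValE U ↑(univ.biUnion T) (fE g A B hm x) :=
        kValE_le_worstValE_of_subset U _ hYxne _
          (fun y hy => by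
            obtain ⟨t, -, hyt⟩ := mem_biUnion.1 hy
            exact hTY t hyt)
          (by simpa using card_biUnion_le_card_mul univ T s fun t _ => hTs t)
    _ ≤ _ := iSup₂_le fun ξ hξ => by
      obtain ⟨t, hξt⟩ := Set.mem_iUnion.1 (hcover.symm ▸ hξ : ξ ∈ ⋃ t, closure (D t))
      obtain ⟨y, hy, hF, hle⟩ := hT t ξ hξt
      refine iInf₂_le_of_le y (mem_biUnion.2 ⟨t, mem_univ t, hy⟩) ?_
      rw [fE, if_pos hF]
      exact_mod_cast hle

end RecourseStable

theorem stmt_13_general (nx ny nξ m : ℕ)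
    (X : Set (Fin nx → ℝ))
    (Y : Set (EuclideanSpace ℝ (Fin ny))) (hYfin : Y.Finite)
    (Yx : (Fin nx → ℝ) → Set (EuclideanSpace ℝ (Fin ny)))
    (hYxsub : ∀ x ∈ X, Yx x ⊆ Y) (hYxne : ∀ x ∈ X, (Yx x).Nonempty)
    (U : Set (Fin nξ → ℝ)) (hUcomp : IsCompact U)
    (g : (Fin nx → ℝ) → EuclideanSpace ℝ (Fin ny) → (Fin nξ → ℝ) → ℝ)
    (hgcont : Continuous fun p : (Fin nx → ℝ) × EuclideanSpace ℝ (Fin ny) × (Fin nξ → ℝ) =>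
      g p.1 p.2.1 p.2.2)
    (hgconc : ∀ x ∈ X, ∀ y ∈ Y, ConcaveOn ℝ U (g x y))
    (L : ℝ) (hL : 0 < L)
    (hlip : ∀ x ∈ X, ∀ ξ ∈ U, ∀ y ∈ Y, ∀ y' ∈ Y, |g x y ξ - g x y' ξ| ≤ L * ‖y - y'‖)
    (A : (Fin nξ → ℝ) →ᵃ[ℝ] Matrix (Fin m) (Fin nx) ℝ)
    (B : (Fin nξ → ℝ) →ᵃ[ℝ] Matrix (Fin m) (Fin ny) ℝ)
    (hm : (Fin nξ → ℝ) →ᵃ[ℝ] (Fin m → ℝ))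
    (R : ℕ)
    (hRS : ∀ x ∈ X, ∃ D : Fin R → Set (Fin nξ → ℝ),
      (∀ t, D t ⊆ U ∧ Convex ℝ (D t) ∧ RecourseStable A B hm Yx x (D t)) ∧
      (⋃ t, closure (D t)) = U) :
    ∀ s : ℕ, 1 ≤ s → s ≤ nξ + 1 →
      (⨅ x ∈ X, kValE U (Yx x) (fE g A B hm x) (R * s)) ≤
        (⨅ x ∈ X, worstValE U (Yx x) (fE g A B hm x)) +
        ((L * Metric.diam Y * Real.log (((nξ : ℝ) + 1) / (s : ℝ)) : ℝ) : EReal) := by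
  intro s hs hsK
  set c := L * Metric.diam Y * Real.log ((nξ + 1) / s)
  rw [← EReal.le_of_forall_lt_iff_le]
  intro z hz
  have hlt : ⨅ x ∈ X, worstValE U (Yx x) (fE g A B hm x) < ((z - c : ℝ) : EReal) := by
    rwa [EReal.coe_sub, EReal.lt_sub_iff_add_lt (Or.inl (EReal.coe_ne_bot c))
      (Or.inl (EReal.coe_ne_top c))]
  obtain ⟨x, hx, hxv⟩ := lt_biInf_iff.1 hlt
  obtain ⟨D, hD, hcover⟩ := hRS x hx
  have hpair : ∀ y ∈ Yx x, ∀ y' ∈ Yx x, ∀ ξ ∈ U, g x y ξ - g x y' ξ ≤ L * Metric.diam Y := by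
    intro y hy y' hy' ξ hξ
    replace hy := hYxsub x hx hy
    replace hy' := hYxsub x hx hy'
    calc g x y ξ - g x y' ξ ≤ |g x y ξ - g x y' ξ| := le_abs_self _
      _ ≤ L * ‖y - y'‖ := hlip x hx ξ hξ y hy y' hy'
      _ ≤ L * Metric.diam Y := by
        rw [← dist_eq_norm]
        gcongr
        exact Metric.dist_le_diam_of_mem hYfin.isBounded hy hy'
  calc ⨅ x ∈ X, kValE U (Yx x) (fE g A B hm x) (R * s)
      ≤ kValE U (Yx x) (fE g A B hm x) (R * s) := iInf₂_le x hx
    _ ≤ ((z - c + c : ℝ) : EReal) :=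
      kValE_le_of_worstValE_lt D (fun t => (hD t).2) hcover hUcomp (hYfin.subset (hYxsub x hx))
        (hYxne x hx) (fun y => hgcont.comp (by fun_prop : Continuous fun ξ => (x, y, ξ)))
        (fun y hy => hgconc x hx y (hYxsub x hx hy)) hpair hxv hs hsK
    _ = z := by rw [sub_add_cancel]

/-- If `g` is `L`-Lipschitz in `y`, the uncertainty set is covered for every
`x ∈ X` by the closures of `R` convex recourse-stable regions, and some `x ∈ X` is feasible,
then for every integer `1 ≤ s ≤ n_ξ + 1` one has
`opt(R·s) − opt(2RO-C) ≤ L · diam(Y) · ln((n_ξ+1)/s)`. -/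
theorem stmt_13 (nx ny nξ m : ℕ) (hnx : 0 < nx) (hny : 0 < ny) (hnξ : 0 < nξ) (hm0 : 0 < m)
    (X : Set (Fin nx → ℝ)) (hXcomp : IsCompact X) (hXne : X.Nonempty)
    (Y : Set (EuclideanSpace ℝ (Fin ny))) (hYfin : Y.Finite) (hYne : Y.Nonempty)
    (hYint : ∀ y ∈ Y, ∀ i, ∃ z : ℤ, y i = (z : ℝ))
    (Yx : (Fin nx → ℝ) → Set (EuclideanSpace ℝ (Fin ny)))
    (hYxsub : ∀ x ∈ X, Yx x ⊆ Y) (hYxne : ∀ x ∈ X, (Yx x).Nonempty)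
    (U : Set (Fin nξ → ℝ)) (hUcomp : IsCompact U) (hUconv : Convex ℝ U) (hUne : U.Nonempty)
    (g : (Fin nx → ℝ) → EuclideanSpace ℝ (Fin ny) → (Fin nξ → ℝ) → ℝ)
    (hgcont : Continuous fun p : (Fin nx → ℝ) × EuclideanSpace ℝ (Fin ny) × (Fin nξ → ℝ) =>
      g p.1 p.2.1 p.2.2)
    (hgconc : ∀ x ∈ X, ∀ y ∈ Y, ConcaveOn ℝ U (g x y))
    (L : ℝ) (hL : 0 < L)
    (hlip : ∀ x ∈ X, ∀ ξ ∈ U, ∀ y ∈ Y, ∀ y' ∈ Y, |g x y ξ - g x y' ξ| ≤ L * ‖y - y'‖)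
    (A : (Fin nξ → ℝ) →ᵃ[ℝ] Matrix (Fin m) (Fin nx) ℝ)
    (B : (Fin nξ → ℝ) →ᵃ[ℝ] Matrix (Fin m) (Fin ny) ℝ)
    (hm : (Fin nξ → ℝ) →ᵃ[ℝ] (Fin m → ℝ))
    (hfeas : ∃ x ∈ X, ∀ ξ ∈ U, ∃ y ∈ Yx x, Feas A B hm x y ξ)
    (R : ℕ) (hR : 0 < R)
    (hRS : ∀ x ∈ X, ∃ D : Fin R → Set (Fin nξ → ℝ),
      (∀ t, D t ⊆ U ∧ Convex ℝ (D t) ∧ RecourseStable A B hm Yx x (D t)) ∧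
      (⋃ t, closure (D t)) = U) :
    ∀ s : ℕ, 1 ≤ s → s ≤ nξ + 1 →
      (⨅ x ∈ X, kValE U (Yx x) (fE g A B hm x) (R * s)) ≤
        (⨅ x ∈ X, worstValE U (Yx x) (fE g A B hm x)) +
        ((L * Metric.diam Y * Real.log (((nξ : ℝ) + 1) / (s : ℝ)) : ℝ) : EReal) :=
  stmt_13_general nx ny nξ m X Y hYfin Yx hYxsub hYxne U hUcomp g hgcont hgconc L hL hlip A B hm R
    hRS
end
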